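/- Let ϱ = Σᵢ ηᵢ |eᵢ⟩⟨eᵢ| be a full-rank passive state for a Hamiltonian H = Σᵢ Eᵢ |eᵢ⟩⟨eᵢ| (i.e. Eᵢ₊₁ ≥ Eᵢ and 0 < ηᵢ₊₁ ≤ ηᵢ), with H not a scalar multiple of the identity. Then the inverse temperature 1/T = Cov(H, −log ϱ)/Δ²H is nonnegative. -/

import Mathlib

open Matrix

/-- Covariance of two matrices with respect to the maximally mixed state `I/d`. -/
noncomputable def mCov {d : ℕ} (X Y : Matrix (Fin d) (Fin d) ℂ) : ℂ :=
  (X * Y).trace / d - (X.trace / d) * (Y.trace / d)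

/-- Variance of a matrix with respect to the maximally mixed state `I/d`. -/
noncomputable def mVar {d : ℕ} (H : Matrix (Fin d) (Fin d) ℂ) : ℂ :=
  (H * H).trace / d - (H.trace / d) ^ 2

/-!
Write `L = V diag(μ) V†` by the spectral theorem. Then `exp L = ϱ` says that `W = U†V` intertwines
`diag(η)` and `diag(exp μ)`, i.e. `ηᵢ = exp μⱼ` whenever `Wᵢⱼ ≠ 0`; hence `W` also intertwines
`diag(log η)` and `diag(μ)`, and `L = U diag(log η) U†`. So `H` and `-L` are diagonal in the same
basis, and `Cov(H, -L)` and `Δ²H` are the covariance and variance of the sequences `Eᵢ` and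
`-log ηᵢ` under the uniform distribution. Both sequences are nondecreasing, so Chebyshev's sum
inequality makes the covariance nonnegative, and the variance of the nonconstant `Eᵢ` is positive.
-/

namespace Matrix

variable {n : Type*} [Fintype n] [DecidableEq n]

section UnitaryConj

variable {α : Type*} [CommRing α] [StarRing α] (U : unitaryGroup n α)

lemma unitaryGroup_conjTranspose_mul_cancel_left (A : Matrix n n α) :
    (U : Matrix n n α)ᴴ * (U * A) = A := by
  rw [← Matrix.mul_assoc, show (U : Matrix n n α)ᴴ * U = 1 from U.2.1, Matrix.one_mul]

lemma unitaryGroup_mul_conjTranspose_cancel_left (A : Matrix n n α) :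
    (U : Matrix n n α) * ((U : Matrix n n α)ᴴ * A) = A := by
  rw [← Matrix.mul_assoc, show (U : Matrix n n α) * (U : Matrix n n α)ᴴ = 1 from U.2.2,
    Matrix.one_mul]

lemma unitary_conj_mul_unitary_conj (A B : Matrix n n α) :
    (U * A * (U : Matrix n n α)ᴴ) * (U * B * (U : Matrix n n α)ᴴ) =
      U * (A * B) * (U : Matrix n n α)ᴴ := by
  simp only [Matrix.mul_assoc, unitaryGroup_conjTranspose_mul_cancel_left]

lemma trace_unitary_conj (A : Matrix n n α) :
    (U * A * (U : Matrix n n α)ᴴ).trace = A.trace := by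
  rw [trace_mul_cycle, show (U : Matrix n n α)ᴴ * U = 1 from U.2.1, Matrix.one_mul]

lemma unitary_conj_eq_unitary_conj_iff (V : unitaryGroup n α) (A B : Matrix n n α) :
    U * A * (U : Matrix n n α)ᴴ = V * B * (V : Matrix n n α)ᴴ ↔
      A * ((U : Matrix n n α)ᴴ * V) = ((U : Matrix n n α)ᴴ * V) * B := by
  have hV : (V : Matrix n n α)ᴴ * V = 1 := V.2.1
  have hV' : (V : Matrix n n α) * (V : Matrix n n α)ᴴ = 1 := V.2.2
  constructor
  · intro h
    calc A * ((U : Matrix n n α)ᴴ * V)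
        = (U : Matrix n n α)ᴴ * (U * A * (U : Matrix n n α)ᴴ) * V := by
          simp only [Matrix.mul_assoc, unitaryGroup_conjTranspose_mul_cancel_left]
      _ = ((U : Matrix n n α)ᴴ * V) * B := by
          rw [h]; simp only [Matrix.mul_assoc, hV, Matrix.mul_one]
  · intro h
    calc U * A * (U : Matrix n n α)ᴴ
        = U * (A * ((U : Matrix n n α)ᴴ * V)) * (V : Matrix n n α)ᴴ := by
          simp only [Matrix.mul_assoc, hV', Matrix.mul_one]
      _ = V * B * (V : Matrix n n α)ᴴ := by
          rw [h]; simp only [Matrix.mul_assoc, unitaryGroup_mul_conjTranspose_cancel_left]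

end UnitaryConj

lemma diagonal_mul_eq_mul_diagonal_iff {R : Type*} [CommRing R] [NoZeroDivisors R]
    {a b : n → R} {W : Matrix n n R} :
    diagonal a * W = W * diagonal b ↔ ∀ i j, W i j ≠ 0 → a i = b j := by
  simp only [← Matrix.ext_iff, diagonal_mul, mul_diagonal]
  refine forall₂_congr fun i j => ?_
  rw [mul_comm, mul_eq_mul_left_iff, or_iff_not_imp_right]

lemma exp_unitary_conj (U : unitaryGroup n ℂ) (A : Matrix n n ℂ) :
    NormedSpace.exp (U * A * (U : Matrix n n ℂ)ᴴ) =
      U * NormedSpace.exp A * (U : Matrix n n ℂ)ᴴ :=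
  exp_units_conj (Unitary.toUnits U) A

lemma exp_diagonal_ofReal (μ : n → ℝ) :
    NormedSpace.exp (diagonal fun i => (μ i : ℂ)) =
      diagonal fun i => (Real.exp (μ i) : ℂ) := by
  rw [exp_diagonal]
  congr 1
  funext i
  rw [Pi.exp_def, ← Complex.exp_eq_exp_ℂ, Complex.ofReal_exp]

theorem IsHermitian.eq_unitary_conj_diagonal_log_of_exp_eq {L : Matrix n n ℂ} (hL : L.IsHermitian)
    (U : unitaryGroup n ℂ) {η : n → ℝ}
    (h : NormedSpace.exp L = U * diagonal (fun i => (η i : ℂ)) * (U : Matrix n n ℂ)ᴴ) :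
    L = U * diagonal (fun i => (Real.log (η i) : ℂ)) * (U : Matrix n n ℂ)ᴴ := by
  set V := hL.eigenvectorUnitary
  set μ := hL.eigenvalues
  have hLV : L = V * diagonal (fun j => (μ j : ℂ)) * (V : Matrix n n ℂ)ᴴ :=
    hL.spectral_theorem
  rw [hLV, exp_unitary_conj, exp_diagonal_ofReal, eq_comm, unitary_conj_eq_unitary_conj_iff,
    diagonal_mul_eq_mul_diagonal_iff] at h
  rw [hLV, eq_comm, unitary_conj_eq_unitary_conj_iff, diagonal_mul_eq_mul_diagonal_iff]
  intro i j hij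
  have hημ : η i = Real.exp (μ j) := by exact_mod_cast h i j hij
  rw [hημ, Real.log_exp]

end Matrix

section UniformCov

variable {ι : Type*} [Fintype ι]

noncomputable def uniformCov (a b : ι → ℝ) : ℝ :=
  (∑ i, a i * b i) / Fintype.card ι -
    (∑ i, a i) / Fintype.card ι * ((∑ i, b i) / Fintype.card ι)

lemma Monovary.uniformCov_nonneg {a b : ι → ℝ} (h : Monovary a b) : 0 ≤ uniformCov a b := by
  have hcheb := h.sum_mul_sum_le_card_mul_sum
  rw [uniformCov, sub_nonneg, div_mul_div_comm]
  rcases (Nat.cast_nonneg (α := ℝ) (Fintype.card ι)).eq_or_lt with hn | hn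
  · simp [← hn]
  · rw [div_le_div_iff₀ (by positivity) hn]
    nlinarith

lemma uniformCov_self_eq_sum_sq [Nonempty ι] (a : ι → ℝ) :
    uniformCov a a = (∑ i, (a i - (∑ j, a j) / Fintype.card ι) ^ 2) / Fintype.card ι := by
  have hn : (Fintype.card ι : ℝ) ≠ 0 := by positivity
  set m := (∑ j, a j) / Fintype.card ι
  have hsum : ∑ j, a j = Fintype.card ι * m := (mul_div_cancel₀ _ hn).symm
  simp only [uniformCov, sub_sq, Finset.sum_add_distrib, Finset.sum_sub_distrib, Finset.sum_const,
    ← Finset.sum_mul, ← Finset.mul_sum, hsum, Finset.card_univ, nsmul_eq_mul]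
  field_simp
  ring

lemma uniformCov_self_pos {a : ι → ℝ} (h : ∀ c, a ≠ Function.const ι c) :
    0 < uniformCov a a := by
  have : Nonempty ι := by
    by_contra hι
    rw [not_nonempty_iff] at hι
    exact h 0 (funext isEmptyElim)
  obtain ⟨i, hi⟩ : ∃ i, a i ≠ (∑ j, a j) / Fintype.card ι := by
    by_contra! hall
    exact h _ (funext hall)
  rw [uniformCov_self_eq_sum_sq]
  refine div_pos (Finset.sum_pos' (fun j _ => sq_nonneg _) ⟨i, Finset.mem_univ _, ?_⟩)
    (by positivity)
  exact sq_pos_of_ne_zero (sub_ne_zero.mpr hi)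

end UniformCov

lemma mVar_eq_mCov {d : ℕ} (H : Matrix (Fin d) (Fin d) ℂ) : mVar H = mCov H H := by
  rw [mVar, mCov, sq]

lemma mCov_unitary_conj_diagonal {d : ℕ} (U : unitaryGroup (Fin d) ℂ) (a b : Fin d → ℝ) :
    mCov ((U : Matrix (Fin d) (Fin d) ℂ) * diagonal (fun i => (a i : ℂ)) *
        (U : Matrix (Fin d) (Fin d) ℂ)ᴴ)
      ((U : Matrix (Fin d) (Fin d) ℂ) * diagonal (fun i => (b i : ℂ)) *
        (U : Matrix (Fin d) (Fin d) ℂ)ᴴ) = uniformCov a b := by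
  rw [mCov, unitary_conj_mul_unitary_conj, trace_unitary_conj, trace_unitary_conj,
    trace_unitary_conj, diagonal_mul_diagonal, trace_diagonal, trace_diagonal, trace_diagonal,
    uniformCov, Fintype.card_fin]
  push_cast
  rfl

theorem passive_state_nonneg_inverse_temperature_general
    {d : ℕ}
    (U : Matrix.unitaryGroup (Fin d) ℂ)
    (E η : Fin d → ℝ)
    (hE : Monotone E) (hη : Antitone η) (hηpos : ∀ i, 0 < η i)
    (H ϱ : Matrix (Fin d) (Fin d) ℂ)
    (hHdef : H = (U : Matrix (Fin d) (Fin d) ℂ) * Matrix.diagonal (fun i => (E i : ℂ)) *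
      (U : Matrix (Fin d) (Fin d) ℂ)ᴴ)
    (hϱdef : ϱ = (U : Matrix (Fin d) (Fin d) ℂ) * Matrix.diagonal (fun i => (η i : ℂ)) *
      (U : Matrix (Fin d) (Fin d) ℂ)ᴴ)
    (hHne : ¬ ∃ c : ℂ, H = c • (1 : Matrix (Fin d) (Fin d) ℂ))
    (L : Matrix (Fin d) (Fin d) ℂ) (hL : L.IsHermitian)
    (hexp : NormedSpace.exp L = ϱ) :
    0 ≤ (mCov H (-L) / mVar H).re ∧ (mCov H (-L) / mVar H).im = 0 := by
  have hnegL : -L = (U : Matrix (Fin d) (Fin d) ℂ) *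
      diagonal (fun i => ((-Real.log (η i) : ℝ) : ℂ)) * (U : Matrix (Fin d) (Fin d) ℂ)ᴴ := by
    rw [hL.eq_unitary_conj_diagonal_log_of_exp_eq U (hexp.trans hϱdef), ← neg_mul, ← mul_neg,
      diagonal_neg]
    push_cast
    rfl
  have hsurprisal : Monotone fun i => -Real.log (η i) := fun i j hij =>
    neg_le_neg (Real.log_le_log (hηpos j) (hη hij))
  have hnonconst : ∀ c, E ≠ Function.const _ c := by
    rintro c rfl
    refine hHne ⟨c, ?_⟩
    have hU : (U : Matrix (Fin d) (Fin d) ℂ) * (U : Matrix (Fin d) (Fin d) ℂ)ᴴ = 1 := U.2.2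
    rw [hHdef]
    simp only [Function.const_apply]
    rw [← smul_one_eq_diagonal, mul_smul_comm, Matrix.mul_one, smul_mul_assoc, hU]
  rw [mVar_eq_mCov, hnegL, hHdef, mCov_unitary_conj_diagonal, mCov_unitary_conj_diagonal,
    ← Complex.ofReal_div, Complex.ofReal_re, Complex.ofReal_im]
  exact ⟨div_nonneg (hE.monovary hsurprisal).uniformCov_nonneg (uniformCov_self_pos hnonconst).le,
    rfl⟩

/-- For a full-rank passive state `ϱ = Σ ηᵢ|eᵢ⟩⟨eᵢ|` of a Hamiltonian
`H = Σ Eᵢ|eᵢ⟩⟨eᵢ|` (energies nondecreasing, populations positive and nonincreasing,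
summing to one), with `H` not a scalar multiple of the identity and `L` the Hermitian
logarithm of `ϱ`, the inverse temperature `Cov(H, -log ϱ)/Δ²H` is nonnegative. -/
theorem passive_state_nonneg_inverse_temperature
    {d : ℕ} (hd : 0 < d)
    (U : Matrix.unitaryGroup (Fin d) ℂ)
    (E η : Fin d → ℝ)
    (hE : Monotone E) (hη : Antitone η) (hηpos : ∀ i, 0 < η i) (hsum : ∑ i, η i = 1)
    (H ϱ : Matrix (Fin d) (Fin d) ℂ)
    (hHdef : H = (U : Matrix (Fin d) (Fin d) ℂ) * Matrix.diagonal (fun i => (E i : ℂ)) *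
      (U : Matrix (Fin d) (Fin d) ℂ)ᴴ)
    (hϱdef : ϱ = (U : Matrix (Fin d) (Fin d) ℂ) * Matrix.diagonal (fun i => (η i : ℂ)) *
      (U : Matrix (Fin d) (Fin d) ℂ)ᴴ)
    (hHne : ¬ ∃ c : ℂ, H = c • (1 : Matrix (Fin d) (Fin d) ℂ))
    (L : Matrix (Fin d) (Fin d) ℂ) (hL : L.IsHermitian)
    (hexp : NormedSpace.exp L = ϱ) :
    0 ≤ (mCov H (-L) / mVar H).re ∧ (mCov H (-L) / mVar H).im = 0 :=
  passive_state_nonneg_inverse_temperature_general U E η hE hη hηpos H ϱ hHdef hϱdef hHne L hL hexp
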